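/- arXiv:2502.14337 — 4 statements merged into one kernel-verified Lean document; each statement's English description precedes it below -/
import Mathlib

section
/- Let W^rec = M * N be a low-rank recurrent weight matrix, where M is an (n × K) real matrix and N is a (K × n) real matrix, let W^in be an (n × p) real matrix, b ∈ ℝ^n, τ > 0, and let f : ℝ → ℝ be applied componentwise to vectors. If r : ℝ → ℝ^n is differentiable and satisfies the leaky firing-rate RNN equation τ · r'(t) = -r(t) + f(W^rec · r(t) + W^in · u(t) + b) for all t (for a given input signal u : ℝ → ℝ^p), then the latent variable κ(t) := N · r(t) is differentiable and satisfies the self-contained latent dynamical system τ · κ'(t) = -κ(t) + N · f(M · κ(t) + W^in · u(t) + b) for all t. -/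
theorem Matrix.hasDerivAt_mulVec {𝕜 m l : Type*} [NontriviallyNormedField 𝕜]
    [Fintype l] (A : Matrix m l 𝕜) {r : 𝕜 → l → 𝕜} {r' : l → 𝕜} {t : 𝕜}
    (hr : HasDerivAt r r' t) : HasDerivAt (fun s => A.mulVec (r s)) (A.mulVec r') t :=
  hasDerivAt_pi.2 fun i =>
    HasDerivAt.fun_sum fun j _ => (hasDerivAt_pi.1 hr j).const_mul (A i j)

theorem latent_dynamics_of_lowrank_leaky_firing_rate_RNN_general
    {n K p : ℕ}
    (M : Matrix (Fin n) (Fin K) ℝ) (N : Matrix (Fin K) (Fin n) ℝ)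
    (Wrec : Matrix (Fin n) (Fin n) ℝ) (hW : Wrec = M * N)
    (Win : Matrix (Fin n) (Fin p) ℝ) (b : Fin n → ℝ)
    (τ : ℝ) (f : ℝ → ℝ)
    (u : ℝ → Fin p → ℝ) (r : ℝ → Fin n → ℝ)
    (hdiff : Differentiable ℝ r)
    (hdyn : ∀ t : ℝ, τ • deriv r t =
      -r t + fun i => f ((Wrec.mulVec (r t) + Win.mulVec (u t) + b) i)) :
    Differentiable ℝ (fun t => N.mulVec (r t)) ∧
    ∀ t : ℝ, τ • deriv (fun s => N.mulVec (r s)) t =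
      -(N.mulVec (r t)) +
        N.mulVec (fun i =>
          f ((M.mulVec (N.mulVec (r t)) + Win.mulVec (u t) + b) i)) := by
  have hκ (t : ℝ) : HasDerivAt (fun s => N.mulVec (r s)) (N.mulVec (deriv r t)) t :=
    N.hasDerivAt_mulVec (hdiff t).hasDerivAt
  refine ⟨fun t => (hκ t).differentiableAt, fun t => ?_⟩
  rw [(hκ t).deriv, ← Matrix.mulVec_smul, hdyn t, hW, Matrix.mulVec_add, Matrix.mulVec_neg,
    Matrix.mulVec_mulVec]

/-- **Latent dynamics of a low-rank leaky firing-rate RNN.**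
If `Wrec = M * N` is a low-rank recurrent weight matrix and `r` is a differentiable
solution of the leaky firing-rate RNN equation
`τ • r'(t) = -r(t) + f(Wrec r(t) + Win u(t) + b)` (with `f` applied componentwise),
then the latent variable `κ(t) = N r(t)` is differentiable and satisfies the
self-contained latent dynamical system
`τ • κ'(t) = -κ(t) + N f(M κ(t) + Win u(t) + b)`. -/
theorem latent_dynamics_of_lowrank_leaky_firing_rate_RNN
    {n K p : ℕ}
    (M : Matrix (Fin n) (Fin K) ℝ) (N : Matrix (Fin K) (Fin n) ℝ)
    (Wrec : Matrix (Fin n) (Fin n) ℝ) (hW : Wrec = M * N)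
    (Win : Matrix (Fin n) (Fin p) ℝ) (b : Fin n → ℝ)
    (τ : ℝ) (hτ : 0 < τ) (f : ℝ → ℝ)
    (u : ℝ → Fin p → ℝ) (r : ℝ → Fin n → ℝ)
    (hdiff : Differentiable ℝ r)
    (hdyn : ∀ t : ℝ, τ • deriv r t =
      -r t + fun i => f ((Wrec.mulVec (r t) + Win.mulVec (u t) + b) i)) :
    Differentiable ℝ (fun t => N.mulVec (r t)) ∧
    ∀ t : ℝ, τ • deriv (fun s => N.mulVec (r s)) t =
      -(N.mulVec (r t)) +
        N.mulVec (fun i =>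
          f ((M.mulVec (N.mulVec (r t)) + Win.mulVec (u t) + b) i)) :=
  latent_dynamics_of_lowrank_leaky_firing_rate_RNN_general M N Wrec hW Win b τ f u r hdiff hdyn
end

section
/- Let P : ℝ^n → ℝ^n be a linear projection (P ∘ P = P), let τ > 0, let u : [0, ∞) → ℝ^p be continuous, and let φ : ℝ^n × ℝ^p → ℝ^n be continuous and Lipschitz in its first argument. Suppose r₁, r₂ : [0, ∞) → ℝ^n are differentiable solutions of the dynamics τ · r'(t) = -r(t) + φ(P r(t), u(t)) with P r₁(0) = P r₂(0). Then: (i) P r₁(t) = P r₂(t) for all t ≥ 0, so the latent variables κ(t) = N r(t) (for any N with N(I − P) = 0) agree along both trajectories; and (ii) the difference Δr(t) := r₁(t) − r₂(t) satisfies Δr(t) = Δr(0) · exp(−t/τ), i.e., deviations orthogonal to the encoding subspace decay exponentially and do not affect the latent processing unit. -/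
/-- **Representational redundancy (Lemma 3 + Theorem 4).**
For a linear projection `P` and dynamics `τ r' = -r + φ(P r, u)` with `φ` continuous
and Lipschitz in its first argument, two solutions whose projections agree at time 0
have (i) equal projections `P r₁(t) = P r₂(t)` for all `t ≥ 0` — hence equal latent
variables `κ = N r` for any encoding `N` with `N (I - P) = 0` — and
(ii) difference decaying exponentially: `r₁(t) - r₂(t) = exp(-t/τ) • (r₁(0) - r₂(0))`. -/
theorem orthogonal_deviations_decay_and_preserve_latents
    {n p K : ℕ}
    (P : (Fin n → ℝ) →ₗ[ℝ] (Fin n → ℝ)) (hP : P ∘ₗ P = P)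
    (τ : ℝ) (hτ : 0 < τ)
    (u : ℝ → Fin p → ℝ) (hu : Continuous u)
    (φ : (Fin n → ℝ) → (Fin p → ℝ) → (Fin n → ℝ))
    (hφcont : Continuous fun q : (Fin n → ℝ) × (Fin p → ℝ) => φ q.1 q.2)
    (L : NNReal) (hφlip : ∀ v : Fin p → ℝ, LipschitzWith L fun x => φ x v)
    (r₁ r₂ : ℝ → Fin n → ℝ)
    (hdiff₁ : Differentiable ℝ r₁) (hdiff₂ : Differentiable ℝ r₂)
    (hdyn₁ : ∀ t : ℝ, 0 ≤ t → τ • deriv r₁ t = -r₁ t + φ (P (r₁ t)) (u t))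
    (hdyn₂ : ∀ t : ℝ, 0 ≤ t → τ • deriv r₂ t = -r₂ t + φ (P (r₂ t)) (u t))
    (h0 : P (r₁ 0) = P (r₂ 0)) :
    (∀ t : ℝ, 0 ≤ t → P (r₁ t) = P (r₂ t)) ∧
    (∀ (N : (Fin n → ℝ) →ₗ[ℝ] (Fin K → ℝ)),
      N ∘ₗ (LinearMap.id - P) = 0 →
      ∀ t : ℝ, 0 ≤ t → N (r₁ t) = N (r₂ t)) ∧
    (∀ t : ℝ, 0 ≤ t →
      r₁ t - r₂ t = Real.exp (-t / τ) • (r₁ 0 - r₂ 0)) := by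
  have hτ' : τ ≠ 0 := ne_of_gt hτ
  set Pc : (Fin n → ℝ) →L[ℝ] (Fin n → ℝ) := LinearMap.toContinuousLinearMap P with hPc
  have hPcP : ∀ x, Pc x = P x := fun x => rfl
  -- explicit formula for the derivatives on `t ≥ 0`
  have hder₁ : ∀ t : ℝ, 0 ≤ t →
      deriv r₁ t = τ⁻¹ • (-r₁ t + φ (P (r₁ t)) (u t)) := by
    intro t ht
    rw [← hdyn₁ t ht, smul_smul, inv_mul_cancel₀ hτ', one_smul]
  have hder₂ : ∀ t : ℝ, 0 ≤ t →
      deriv r₂ t = τ⁻¹ • (-r₂ t + φ (P (r₂ t)) (u t)) := by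
    intro t ht
    rw [← hdyn₂ t ht, smul_smul, inv_mul_cancel₀ hτ', one_smul]
  -- the difference of projections
  set w : ℝ → Fin n → ℝ := fun t => P (r₁ t) - P (r₂ t) with hw
  have hwderiv : ∀ t : ℝ, HasDerivAt w (P (deriv r₁ t) - P (deriv r₂ t)) t := by
    intro t
    exact ((Pc.hasFDerivAt.comp_hasDerivAt t (hdiff₁ t).hasDerivAt).sub
      (Pc.hasFDerivAt.comp_hasDerivAt t (hdiff₂ t).hasDerivAt))
  have hwcont : Continuous w := by
    exact (Pc.continuous.comp hdiff₁.continuous).sub (Pc.continuous.comp hdiff₂.continuous)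
  -- part (i): projections agree, by Grönwall
  have part1 : ∀ t : ℝ, 0 ≤ t → P (r₁ t) = P (r₂ t) := by
    intro t ht
    have key : ∀ b : ℝ, ∀ x ∈ Set.Icc (0:ℝ) b, ‖w x‖ ≤ gronwallBound 0 (τ⁻¹ * (1 + ‖Pc‖ * L)) 0 (x - 0) := by
      intro b
      apply norm_le_gronwallBound_of_norm_deriv_right_le
        (f' := fun t => P (deriv r₁ t) - P (deriv r₂ t))
        (hwcont.continuousOn)
        (fun x hx => (hwderiv x).hasDerivWithinAt)
      · simp [hw, h0]
      · intro x hx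
        have hx0 : (0:ℝ) ≤ x := hx.1
        have hderiv : P (deriv r₁ x) - P (deriv r₂ x)
            = τ⁻¹ • (-(w x) + P (φ (P (r₁ x)) (u x) - φ (P (r₂ x)) (u x))) := by
          rw [hder₁ x hx0, hder₂ x hx0]
          simp only [map_smul, map_add, map_neg, map_sub, hw]
          rw [← smul_sub]
          congr 1
          abel
        rw [hderiv, add_zero]
        have hlip : ‖φ (P (r₁ x)) (u x) - φ (P (r₂ x)) (u x)‖ ≤ L * ‖w x‖ := by
          have := (hφlip (u x)).dist_le_mul (P (r₁ x)) (P (r₂ x))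
          simpa [dist_eq_norm, hw] using this
        have hPb : ‖P (φ (P (r₁ x)) (u x) - φ (P (r₂ x)) (u x))‖
            ≤ ‖Pc‖ * (L * ‖w x‖) := by
          calc ‖P (φ (P (r₁ x)) (u x) - φ (P (r₂ x)) (u x))‖
              = ‖Pc (φ (P (r₁ x)) (u x) - φ (P (r₂ x)) (u x))‖ := rfl
            _ ≤ ‖Pc‖ * ‖φ (P (r₁ x)) (u x) - φ (P (r₂ x)) (u x)‖ := Pc.le_opNorm _
            _ ≤ ‖Pc‖ * (L * ‖w x‖) := by
                exact mul_le_mul_of_nonneg_left hlip (norm_nonneg _)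
        calc ‖τ⁻¹ • (-(w x) + P (φ (P (r₁ x)) (u x) - φ (P (r₂ x)) (u x)))‖
            = τ⁻¹ * ‖-(w x) + P (φ (P (r₁ x)) (u x) - φ (P (r₂ x)) (u x))‖ := by
              rw [norm_smul, Real.norm_eq_abs, abs_of_pos (inv_pos.mpr hτ)]
          _ ≤ τ⁻¹ * (‖w x‖ + ‖Pc‖ * (L * ‖w x‖)) := by
              apply mul_le_mul_of_nonneg_left _ (inv_pos.mpr hτ).le
              calc ‖-(w x) + P (φ (P (r₁ x)) (u x) - φ (P (r₂ x)) (u x))‖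
                  ≤ ‖-(w x)‖ + ‖P (φ (P (r₁ x)) (u x) - φ (P (r₂ x)) (u x))‖ := norm_add_le _ _
                _ ≤ ‖w x‖ + ‖Pc‖ * (L * ‖w x‖) := by rw [norm_neg]; exact add_le_add le_rfl hPb
          _ = τ⁻¹ * (1 + ‖Pc‖ * L) * ‖w x‖ := by ring
    have := key t t ⟨ht, le_refl t⟩
    rw [gronwallBound_ε0_δ0] at this
    have : w t = 0 := norm_le_zero_iff.mp this
    have := sub_eq_zero.mp this
    exact this
  refine ⟨part1, ?_, ?_⟩
  · -- latent variables agree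
    intro N hN t ht
    have hNP : ∀ x, N x = N (P x) := by
      intro x
      have := LinearMap.congr_fun hN x
      simp only [LinearMap.comp_apply, LinearMap.sub_apply, LinearMap.id_apply,
        LinearMap.zero_apply, map_sub] at this
      exact sub_eq_zero.mp this
    rw [hNP (r₁ t), hNP (r₂ t), part1 t ht]
  · -- exponential decay
    intro t ht
    set Δ : ℝ → Fin n → ℝ := fun s => r₁ s - r₂ s with hΔ
    have hΔderiv : ∀ s : ℝ, 0 ≤ s → HasDerivAt Δ (-(τ⁻¹) • Δ s) s := by
      intro s hs
      have h := ((hdiff₁ s).hasDerivAt.sub (hdiff₂ s).hasDerivAt)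
      have : deriv r₁ s - deriv r₂ s = -(τ⁻¹) • Δ s := by
        rw [hder₁ s hs, hder₂ s hs, part1 s hs, ← smul_sub]
        rw [neg_smul, ← smul_neg]
        congr 1
        simp only [hΔ]
        abel
      rwa [this] at h
    set g : ℝ → Fin n → ℝ := fun s => Real.exp (s / τ) • Δ s with hg
    have hgderiv : ∀ s : ℝ, 0 ≤ s → HasDerivAt g 0 s := by
      intro s hs
      have hc : HasDerivAt (fun s : ℝ => Real.exp (s / τ)) (Real.exp (s / τ) * τ⁻¹) s := by
        have : HasDerivAt (fun s : ℝ => s / τ) τ⁻¹ s := by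
          simpa using (hasDerivAt_id s).div_const τ
        exact this.exp
      have := hc.smul (hΔderiv s hs)
      refine this.congr_deriv ?_
      rw [smul_smul, ← add_smul]
      have h0' : Real.exp (s / τ) * -τ⁻¹ + Real.exp (s / τ) * τ⁻¹ = 0 := by ring
      rw [h0', zero_smul]
    have hgcont : Continuous g :=
      (Real.continuous_exp.comp (continuous_id.div_const τ)).smul
        (hdiff₁.continuous.sub hdiff₂.continuous)
    have hconst : g t = g 0 := by
      rcases eq_or_lt_of_le ht with h | h
      · rw [← h]
      · exact constant_of_has_deriv_right_zero (a := 0) (b := t)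
          hgcont.continuousOn
          (fun x hx => (hgderiv x hx.1).hasDerivWithinAt)
          t ⟨ht, le_refl t⟩
    have : Real.exp (t / τ) • Δ t = Δ 0 := by
      simpa [hg] using hconst
    have := congrArg (fun v => Real.exp (-(t / τ)) • v) this
    simp only [smul_smul, ← Real.exp_add, neg_add_cancel, Real.exp_zero, one_smul] at this
    rw [neg_div]
    exact this
end

section
/- Let N ∈ ℕ with N ≥ 1 and let f : ℝ → ℝ satisfy f(x) = 0 for all x ≤ 0 and f(x) > 0 for all x > 0. For k = 1, …, N define the vectors w^{(k)} ∈ ℝ^N by w^{(k)}_i = f((k + 1 − i)/N) for i = 1, …, N (these are the neural activity patterns obtained by statically embedding the one-dimensional latent values κ = k/N via the tuning curves r_i(κ) = f(κ − (i−1)/N)). Then the family {w^{(1)}, …, w^{(N)}} is linearly independent in ℝ^N; hence the embedded neural activities span an N-dimensional linear subspace, i.e., a one-dimensional latent variable achieves the maximal linear dimensionality N. -/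
/-! The activity matrix `(f(κ_k - b_i))_{k,i}` is lower triangular with positive diagonal as soon
as the latent values interlace the biases, `b_k < κ_k ≤ b_{k+1}`: the neuron with bias `b_i > κ_k`
is silent at `κ_k`, while neuron `k` is active there. Hence its rows are linearly independent. -/

theorem Matrix.IsLowerTriangular.linearIndependent_rows {K m : Type*} [Field K] [Fintype m]
    [LinearOrder m] {A : Matrix m m K} (hA : A.IsLowerTriangular) (hdiag : ∀ i, A i i ≠ 0) :
    LinearIndependent K A.row := by
  have hdet : A.det ≠ 0 := by
    rw [Matrix.det_of_isLowerTriangular A hA]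
    exact Finset.prod_ne_zero_iff.2 fun i _ => hdiag i
  exact Matrix.linearIndependent_rows_iff_isUnit.2
    ((Matrix.isUnit_iff_isUnit_det A).2 hdet.isUnit)

theorem linearIndependent_tuningCurves_of_interlacing {ι : Type*} [Fintype ι] [LinearOrder ι]
    {f : ℝ → ℝ} (hf0 : ∀ x, x ≤ 0 → f x = 0) (hfpos : ∀ x, 0 < x → 0 < f x)
    {κ b : ι → ℝ} (hactive : ∀ k, b k < κ k) (hsilent : ∀ k i, k < i → κ k ≤ b i) :
    LinearIndependent ℝ (fun k i => f (κ k - b i)) :=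
  Matrix.IsLowerTriangular.linearIndependent_rows (A := Matrix.of fun k i => f (κ k - b i))
    (fun k i hki => hf0 _ (sub_nonpos.2 (hsilent k i hki)))
    (fun k => (hfpos _ (sub_pos.2 (hactive k))).ne')

theorem static_embedding_achieves_maximal_linear_dimensionality_general
    (N : ℕ)
    (f : ℝ → ℝ)
    (hf0 : ∀ x : ℝ, x ≤ 0 → f x = 0)
    (hfpos : ∀ x : ℝ, 0 < x → 0 < f x) :
    LinearIndependent ℝ
        (fun k : Fin N => fun i : Fin N =>
          f ((((k : ℕ) : ℝ) + 1 - ((i : ℕ) : ℝ)) / N)) ∧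
      Module.finrank ℝ
        (Submodule.span ℝ
          (Set.range (fun k : Fin N => fun i : Fin N =>
            f ((((k : ℕ) : ℝ) + 1 - ((i : ℕ) : ℝ)) / N)))) = N := by
  have hli : LinearIndependent ℝ (fun k : Fin N => fun i : Fin N =>
      f ((((k : ℕ) : ℝ) + 1 - ((i : ℕ) : ℝ)) / N)) := by
    simp only [sub_div]
    refine linearIndependent_tuningCurves_of_interlacing hf0 hfpos (fun k => ?_) fun k i hki => ?_
    · have hN : (0 : ℝ) < N := by exact_mod_cast k.pos
      gcongr
      exact lt_add_one _
    · gcongr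
      exact_mod_cast hki
  exact ⟨hli, by rw [finrank_span_eq_card hli, Fintype.card_fin]⟩

/-- **Unbounded linear dimensionality from a one-dimensional latent variable
(Proposition 2 / Corollary 2).** Let `f` vanish on the nonpositive reals and be
strictly positive on the positive reals. The `N` neural activity patterns
`w^(k) ∈ ℝ^N`, `w^(k)_i = f((k + 1 - i)/N)` (for `k, i = 1, …, N`), obtained by
statically embedding the latent values `κ = k/N` through the tuning curves
`r_i(κ) = f(κ - (i-1)/N)`, are linearly independent; hence they span an
`N`-dimensional subspace, the maximal linear dimensionality. -/
theorem static_embedding_achieves_maximal_linear_dimensionality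
    (N : ℕ) (hN : 1 ≤ N)
    (f : ℝ → ℝ)
    (hf0 : ∀ x : ℝ, x ≤ 0 → f x = 0)
    (hfpos : ∀ x : ℝ, 0 < x → 0 < f x) :
    LinearIndependent ℝ
        (fun k : Fin N => fun i : Fin N =>
          f ((((k : ℕ) : ℝ) + 1 - ((i : ℕ) : ℝ)) / N)) ∧
      Module.finrank ℝ
        (Submodule.span ℝ
          (Set.range (fun k : Fin N => fun i : Fin N =>
            f ((((k : ℕ) : ℝ) + 1 - ((i : ℕ) : ℝ)) / N)))) = N :=
  static_embedding_achieves_maximal_linear_dimensionality_general N f hf0 hfpos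
end

section
/- Let N ≥ 1, let n₁, …, n_N and m₁, …, m_N be real numbers, and define G : ℝ → ℝ by G(κ) = -κ + (1/N) · Σ_{i=1}^N n_i · tanh(m_i · κ). If the empirical covariance satisfies (1/N) · Σ_{i=1}^N n_i · m_i > 1, then there exists κ* > 0 with G(κ*) = 0; that is, besides the repelling fixed point at the origin, the one-dimensional latent processing unit possesses a strictly positive fixed point (and by oddness of G, also the fixed point −κ*). -/
lemma my_continuous_tanh : Continuous Real.tanh := by
  have : Real.tanh = fun x => Real.sinh x / Real.cosh x := by
    funext x; exact Real.tanh_eq_sinh_div_cosh x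
  rw [this]
  exact Real.continuous_sinh.div Real.continuous_cosh fun x => (Real.cosh_pos x).ne'

lemma my_abs_tanh_le_one (x : ℝ) : |Real.tanh x| ≤ 1 := by
  rw [Real.tanh_eq_sinh_div_cosh, abs_div, abs_of_pos (Real.cosh_pos x),
    div_le_one (Real.cosh_pos x)]
  rw [abs_le]
  constructor <;> [skip; skip] <;>
  · rw [Real.sinh_eq, Real.cosh_eq]
    nlinarith [Real.exp_pos x, Real.exp_pos (-x)]

lemma my_hasDerivAt_tanh_zero : HasDerivAt Real.tanh 1 0 := by
  have h : HasDerivAt (fun x => Real.sinh x / Real.cosh x)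
      ((Real.cosh 0 * Real.cosh 0 - Real.sinh 0 * Real.sinh 0) / (Real.cosh 0) ^ 2) 0 :=
    (Real.hasDerivAt_sinh 0).div (Real.hasDerivAt_cosh 0) (Real.cosh_pos 0).ne'
  have heq : (fun x => Real.sinh x / Real.cosh x) = Real.tanh := by
    funext x; exact (Real.tanh_eq_sinh_div_cosh x).symm
  rw [heq] at h
  simpa using h

/-- **Existence of a positive fixed point of the bistable latent flow.**
For `G(κ) = -κ + (1/N) Σ_i n_i tanh(m_i κ)`, if the empirical covariance satisfies
`(1/N) Σ_i n_i m_i > 1`, then there exists `κ* > 0` with `G(κ*) = 0`. -/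
theorem bistable_latent_flow_positive_fixed_point
    (N : ℕ) (hN : 1 ≤ N) (n m : Fin N → ℝ)
    (hcov : 1 < (1 / (N : ℝ)) * ∑ i, n i * m i) :
    ∃ κs : ℝ, 0 < κs ∧
      -κs + (1 / (N : ℝ)) * ∑ i, n i * Real.tanh (m i * κs) = 0 := by
  set G : ℝ → ℝ := fun κ => -κ + (1 / (N : ℝ)) * ∑ i, n i * Real.tanh (m i * κ) with hG
  -- continuity
  have contG : Continuous G := by
    apply Continuous.add continuous_neg
    apply continuous_const.mul
    exact continuous_finset_sum _ fun i _ =>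
      continuous_const.mul (my_continuous_tanh.comp (continuous_const.mul continuous_id))
  -- derivative at 0
  have hd : HasDerivAt G ((1 / (N : ℝ)) * (∑ i, n i * m i) - 1) 0 := by
    have hsum : HasDerivAt (fun κ => (1 / (N : ℝ)) * ∑ i, n i * Real.tanh (m i * κ))
        ((1 / (N : ℝ)) * ∑ i, n i * m i) 0 := by
      apply HasDerivAt.const_mul
      have : HasDerivAt (fun κ => ∑ i, n i * Real.tanh (m i * κ)) (∑ i, n i * m i) 0 := by
        apply HasDerivAt.fun_sum
        intro i _
        have h1 : HasDerivAt (fun κ : ℝ => m i * κ) (m i) 0 := by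
          simpa using (hasDerivAt_id (0 : ℝ)).const_mul (m i)
        have htanh : HasDerivAt Real.tanh 1 (m i * 0) := by
          simpa using my_hasDerivAt_tanh_zero
        have h2 : HasDerivAt (fun κ => Real.tanh (m i * κ)) (1 * m i) 0 :=
          htanh.comp 0 h1
        simpa [mul_comm] using h2.const_mul (n i)
      exact this
    have := hsum.add_const 0
    have hneg : HasDerivAt (fun κ : ℝ => -κ) (-1) 0 := by
      exact (hasDerivAt_id' (0 : ℝ)).neg
    have := hneg.fun_add hsum
    simpa [hG, sub_eq_add_neg, add_comm] using this
  have hdpos : 0 < (1 / (N : ℝ)) * (∑ i, n i * m i) - 1 := by linarith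
  have hG0 : G 0 = 0 := by simp [hG]
  -- find small positive point where G > 0
  have hslope := hasDerivAt_iff_tendsto_slope.mp hd
  set C : ℝ := (1 / (N : ℝ)) * ∑ i, |n i| with hC
  have hCnn : 0 ≤ C := by
    apply mul_nonneg (by positivity)
    exact Finset.sum_nonneg fun i _ => abs_nonneg _
  set K : ℝ := C + 1 with hK
  have hKpos : 0 < K := by linarith
  have hev : ∀ᶠ x in nhdsWithin 0 (Set.Ioi 0), 0 < slope G 0 x := by
    have h1 : ∀ᶠ x in nhdsWithin (0:ℝ) {(0:ℝ)}ᶜ, 0 < slope G 0 x :=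
      hslope.eventually (eventually_gt_nhds hdpos)
    exact h1.filter_mono (nhdsWithin_mono _ fun x hx => ne_of_gt hx)
  have hmem : Set.Ioo (0:ℝ) K ∈ nhdsWithin (0:ℝ) (Set.Ioi 0) :=
    Ioo_mem_nhdsGT_of_mem ⟨le_refl 0, hKpos⟩
  have hev2 : ∀ᶠ x in nhdsWithin (0:ℝ) (Set.Ioi 0), x ∈ Set.Ioo (0:ℝ) K := hmem
  obtain ⟨x, hx1, hx2⟩ := (hev.and hev2).exists
  have hxpos : 0 < x := hx2.1
  have hxK : x < K := hx2.2
  have hGx : 0 < G x := by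
    have hx : G x = slope G 0 x * x := by
      rw [slope_def_field, hG0]
      rw [sub_zero, sub_zero, div_mul_cancel₀ _ hxpos.ne']
    rw [hx]
    exact mul_pos hx1 hxpos
  -- G K < 0
  have hGK : G K < 0 := by
    have hbound : (1 / (N : ℝ)) * ∑ i, n i * Real.tanh (m i * K) ≤ C := by
      apply mul_le_mul_of_nonneg_left _ (by positivity)
      apply Finset.sum_le_sum
      intro i _
      calc n i * Real.tanh (m i * K) ≤ |n i * Real.tanh (m i * K)| := le_abs_self _
        _ = |n i| * |Real.tanh (m i * K)| := abs_mul _ _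
        _ ≤ |n i| * 1 := mul_le_mul_of_nonneg_left (my_abs_tanh_le_one _) (abs_nonneg _)
        _ = |n i| := mul_one _
    have : G K ≤ -K + C := by simp only [hG]; linarith
    linarith
  -- IVT on [x, K]
  have hsub : Set.Icc (G K) (G x) ⊆ G '' Set.Icc x K :=
    intermediate_value_Icc' hxK.le contG.continuousOn
  obtain ⟨κs, hκs, hκsG⟩ := hsub ⟨hGK.le, hGx.le⟩
  exact ⟨κs, lt_of_lt_of_le hxpos hκs.1, hκsG⟩
end
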